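/- If X is a log-concave integer-valued random variable with Var(X) ≤ 1, then for all t ≥ 0, P(|X − E[X]| ≥ t) ≤ 2·e^{−t/6}. -/

import Mathlib

/-!
Log-concavity gives the mass function geometric tails on both sides, so `(X - m) ^ 2` is integrable
(the Bochner integral in the hypothesis is not a junk value) and Chebyshev yields
`P(|X - m| ≥ 2) ≤ 1/4`. The tail `T n = P(X ≥ n)` of a log-concave mass function is again
log-concave, so the ratios `T (n + 1) / T n` are nonincreasing. With `a = ⌊m⌋ - 2`, Chebyshev gives
`T a ≥ 3/4` and `T (a + 5) ≤ 1/4`, hence beyond `a + 5` every step multiplies `T` by at most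
`3 ^ (-1/5)`; this gives `P(X ≥ m + t) ≤ e^(-t/6)` for `t ≥ 3`, the same bound for `-X` handles the
lower tail, and for `t ≤ 3` the right-hand side is at least `1`.
-/

open MeasureTheory ProbabilityTheory
open scoped ProbabilityTheory

/-- A function `p : ℤ → ℝ` is a log-concave probability mass function if
`p(k)² ≥ p(k-1)·p(k+1)` for all `k ∈ ℤ` and its support is an integer interval. -/
def IsLogConcavePMF (p : ℤ → ℝ) : Prop :=
  (∀ k : ℤ, p (k - 1) * p (k + 1) ≤ p k ^ 2) ∧
  (∀ a b c : ℤ, a ≤ b → b ≤ c → 0 < p a → 0 < p c → 0 < p b)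

open Real

namespace IsLogConcavePMF

variable {p : ℤ → ℝ}

theorem ratio_antitone (hp : IsLogConcavePMF p) (h0 : ∀ k, 0 ≤ p k) {k n : ℤ} (hkn : k ≤ n) :
    p (n + 1) * p k ≤ p (k + 1) * p n := by
  induction n, hkn using Int.leInduction with
  | base => rfl
  | succ n hkn ih =>
    have hsq : p n * p (n + 1 + 1) ≤ p (n + 1) ^ 2 := by simpa using hp.1 (n + 1)
    rcases (h0 k).eq_or_lt with hk | hk
    · rw [← hk, mul_zero]
      exact mul_nonneg (h0 _) (h0 _)
    rcases (h0 (n + 1 + 1)).eq_or_lt with hn2 | hn2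
    · rw [← hn2, zero_mul]
      exact mul_nonneg (h0 _) (h0 _)
    have hn : 0 < p n := hp.2 k n (n + 1 + 1) hkn (by omega) hk hn2
    have hn1 : 0 < p (n + 1) := hp.2 k (n + 1) (n + 1 + 1) (by omega) (by omega) hk hn2
    nlinarith [mul_le_mul_of_nonneg_left ih hn1.le]

theorem pow_mul_le (hp : IsLogConcavePMF p) (h0 : ∀ k, 0 ≤ p k) (a : ℤ) (d : ℕ) {n : ℤ}
    (hn : a + d ≤ n) : p (n + 1) ^ d * p a ≤ p n ^ d * p (a + d) := by
  induction d with
  | zero => simp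
  | succ d ih =>
    push_cast at hn ⊢
    calc p (n + 1) ^ (d + 1) * p a = p (n + 1) * (p (n + 1) ^ d * p a) := by ring
      _ ≤ p (n + 1) * (p n ^ d * p (a + d)) :=
          mul_le_mul_of_nonneg_left (ih (by omega)) (h0 _)
      _ = p n ^ d * (p (n + 1) * p (a + d)) := by ring
      _ ≤ p n ^ d * (p (a + d + 1) * p n) :=
          mul_le_mul_of_nonneg_left (hp.ratio_antitone h0 (by omega)) (pow_nonneg (h0 _) _)
      _ = p n ^ (d + 1) * p (a + (d + 1)) := by ring_nf

-- With `b = a + d` this reads `(p (b + s) / p b) ^ d ≤ (p b / p a) ^ s`: beyond `b`, `p` decays at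
-- least as fast as its average rate on `[a, b]`.
theorem decay (hp : IsLogConcavePMF p) (h0 : ∀ k, 0 ≤ p k) (a : ℤ) (d s : ℕ) :
    p (a + d + s) ^ d * p a ^ s ≤ p (a + d) ^ (d + s) := by
  induction s with
  | zero => simp
  | succ s ih =>
    push_cast
    calc p (a + d + (s + 1)) ^ d * p a ^ (s + 1)
        = (p (a + d + s + 1) ^ d * p a) * p a ^ s := by ring_nf
      _ ≤ (p (a + d + s) ^ d * p (a + d)) * p a ^ s :=
          mul_le_mul_of_nonneg_right (hp.pow_mul_le h0 a d (by omega)) (pow_nonneg (h0 _) _)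
      _ = p (a + d) * (p (a + d + s) ^ d * p a ^ s) := by ring
      _ ≤ p (a + d) * p (a + d) ^ (d + s) := mul_le_mul_of_nonneg_left ih (h0 _)
      _ = p (a + d) ^ (d + (s + 1)) := by ring

theorem comp_neg (hp : IsLogConcavePMF p) : IsLogConcavePMF (fun k => p (-k)) := by
  refine ⟨fun k => ?_, fun a b c hab hbc ha hc => hp.2 (-c) (-b) (-a) (by omega) (by omega) hc ha⟩
  have := hp.1 (-k)
  rw [show -k - 1 = -(k + 1) by ring, show -k + 1 = -(k - 1) by ring] at this
  linarith

end IsLogConcavePMF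

theorem Summable.comp_add_natCast {p : ℤ → ℝ} (hsum : Summable p) (n : ℤ) :
    Summable fun j : ℕ => p (n + j) :=
  hsum.comp_injective ((add_right_injective n).comp Nat.cast_injective)

theorem exists_pos_succ_lt_of_summable {p : ℤ → ℝ} (hsum : Summable p) {k₀ : ℤ} (hk₀ : 0 < p k₀) :
    ∃ k, 0 < p k ∧ p (k + 1) < p k := by
  by_contra! hmono
  have hgrow : ∀ j : ℕ, p k₀ ≤ p (k₀ + j) := by
    intro j
    induction j with
    | zero => simp
    | succ j ih =>
      push_cast
      rw [← add_assoc]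
      exact ih.trans (hmono _ (hk₀.trans_le ih))
  exact hk₀.not_ge (ge_of_tendsto' (hsum.comp_add_natCast k₀).tendsto_atTop_zero hgrow)

theorem IsLogConcavePMF.exists_geometric_bound {p : ℤ → ℝ} (hp : IsLogConcavePMF p)
    (h0 : ∀ k, 0 ≤ p k) (hsum : Summable p) :
    ∃ (N : ℕ) (C r : ℝ), 0 ≤ r ∧ r < 1 ∧ ∀ s : ℕ, p (N + s) ≤ C * r ^ s := by
  by_cases hpos : ∃ k, 0 < p k
  swap
  · push Not at hpos
    exact ⟨0, 0, 0, le_rfl, one_pos, fun s => by simpa using hpos _⟩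
  obtain ⟨k₀, hk₀⟩ := hpos
  obtain ⟨k, hk, hdesc⟩ := exists_pos_succ_lt_of_summable hsum hk₀
  set r := p (k + 1) / p k
  have hr0 : 0 ≤ r := div_nonneg (h0 _) hk.le
  have hgeom : ∀ s : ℕ, p (k + 1 + s) ≤ p (k + 1) * r ^ s := by
    intro s
    have := hp.decay h0 k 1 s
    rw [div_pow, mul_div_assoc', le_div_iff₀ (pow_pos hk s)]
    simpa [add_comm 1 s, pow_succ'] using this
  refine ⟨(k + 1).toNat, p (k + 1), r, hr0, (div_lt_one hk).2 hdesc, fun s => ?_⟩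
  obtain ⟨j, hj⟩ : ∃ j : ℕ, ((k + 1).toNat : ℤ) = k + 1 + j := ⟨(-(k + 1)).toNat, by omega⟩
  calc p ((k + 1).toNat + s) = p (k + 1 + (j + s : ℕ)) := by rw [hj]; push_cast; ring_nf
    _ ≤ p (k + 1) * r ^ (j + s) := hgeom _
    _ ≤ p (k + 1) * r ^ s := mul_le_mul_of_nonneg_left
      (pow_le_pow_of_le_one hr0 ((div_lt_one hk).2 hdesc).le (Nat.le_add_left s j)) (h0 _)

theorem summable_sq_add_mul_geometric {r : ℝ} (hr0 : 0 ≤ r) (hr1 : r < 1) (a : ℝ) :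
    Summable fun n : ℕ => ((n : ℝ) + a) ^ 2 * r ^ n := by
  have hr : ‖r‖ < 1 := by rwa [Real.norm_of_nonneg hr0]
  have h := (summable_pow_mul_geometric_of_norm_lt_one 2 hr).add
    (((summable_pow_mul_geometric_of_norm_lt_one 1 hr).mul_left (2 * a)).add
      ((summable_geometric_of_lt_one hr0 hr1).mul_left (a ^ 2)))
  exact h.congr fun n => by ring

theorem summable_sq_sub_mul_of_le_geometric {f : ℕ → ℝ} (hf : ∀ n, 0 ≤ f n) {N : ℕ} {C r : ℝ}
    (hr0 : 0 ≤ r) (hr1 : r < 1) (hle : ∀ s, f (N + s) ≤ C * r ^ s) (c : ℝ) :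
    Summable fun n : ℕ => ((n : ℝ) - c) ^ 2 * f n := by
  refine (summable_nat_add_iff N).1 <|
    ((summable_sq_add_mul_geometric hr0 hr1 (N - c)).mul_left C).of_nonneg_of_le
      (fun n => mul_nonneg (sq_nonneg _) (hf _)) fun n => ?_
  calc ((↑(n + N) : ℝ) - c) ^ 2 * f (n + N) ≤ ((n : ℝ) + (N - c)) ^ 2 * (C * r ^ n) := by
        rw [add_comm n N]
        push_cast
        rw [show (N : ℝ) + n - c = n + (N - c) by ring]
        exact mul_le_mul_of_nonneg_left (hle n) (sq_nonneg _)
    _ = C * (((n : ℝ) + (N - c)) ^ 2 * r ^ n) := by ring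

theorem IsLogConcavePMF.summable_sq_sub_mul {p : ℤ → ℝ} (hp : IsLogConcavePMF p)
    (h0 : ∀ k, 0 ≤ p k) (hsum : Summable p) (m : ℝ) :
    Summable fun k : ℤ => ((k : ℝ) - m) ^ 2 * p k := by
  obtain ⟨N, C, r, hr0, hr1, hle⟩ := hp.exists_geometric_bound h0 hsum
  obtain ⟨N', C', r', hr0', hr1', hle'⟩ := hp.comp_neg.exists_geometric_bound (fun k => h0 _)
    ((Equiv.neg ℤ).summable_iff.2 hsum)
  refine .of_nat_of_neg ?_ ?_
  · exact summable_sq_sub_mul_of_le_geometric (fun n => h0 _) hr0 hr1 (by exact_mod_cast hle) m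
  · refine (summable_sq_sub_mul_of_le_geometric (f := fun n : ℕ => p (-n)) (fun n => h0 _)
      hr0' hr1' (fun s => by simpa using hle' s) (-m)).congr fun n => ?_
    push_cast
    ring

noncomputable def upperTail (p : ℤ → ℝ) (n : ℤ) : ℝ := ∑' j : ℕ, p (n + j)

section upperTail

variable {p : ℤ → ℝ}

theorem upperTail_eq_add (hsum : Summable p) (n : ℤ) :
    upperTail p n = p n + upperTail p (n + 1) := by
  rw [upperTail, (hsum.comp_add_natCast n).tsum_eq_zero_add, upperTail]
  simp [add_assoc, add_comm (1 : ℤ)]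

theorem upperTail_nonneg (h0 : ∀ k, 0 ≤ p k) (n : ℤ) : 0 ≤ upperTail p n :=
  tsum_nonneg fun _ => h0 _

theorem upperTail_antitone (h0 : ∀ k, 0 ≤ p k) (hsum : Summable p) : Antitone (upperTail p) :=
  antitone_int_of_succ_le fun n => by rw [upperTail_eq_add hsum n]; linarith [h0 n]

theorem IsLogConcavePMF.mul_upperTail_succ_le (hp : IsLogConcavePMF p) (h0 : ∀ k, 0 ≤ p k)
    (hsum : Summable p) (n : ℤ) :
    p (n - 1) * upperTail p (n + 1) ≤ p n * upperTail p n := by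
  rw [upperTail, upperTail, ← tsum_mul_left, ← tsum_mul_left]
  refine Summable.tsum_le_tsum (fun j => ?_) ((hsum.comp_add_natCast _).mul_left _)
    ((hsum.comp_add_natCast _).mul_left _)
  have := hp.ratio_antitone h0 (show n - 1 ≤ n + j by omega)
  rw [sub_add_cancel] at this
  rw [show n + 1 + (j : ℤ) = n + j + 1 by ring]
  linarith

theorem IsLogConcavePMF.isLogConcavePMF_upperTail (hp : IsLogConcavePMF p) (h0 : ∀ k, 0 ≤ p k)
    (hsum : Summable p) : IsLogConcavePMF (upperTail p) := by
  refine ⟨fun n => ?_, fun a b c _ hbc _ hc => hc.trans_le (upperTail_antitone h0 hsum hbc)⟩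
  have h₁ := upperTail_eq_add hsum (n - 1)
  have h₂ := upperTail_eq_add hsum n
  rw [sub_add_cancel] at h₁
  calc upperTail p (n - 1) * upperTail p (n + 1)
      = p (n - 1) * upperTail p (n + 1) + upperTail p n * upperTail p (n + 1) := by
        rw [h₁]; ring
    _ ≤ p n * upperTail p n + upperTail p n * upperTail p (n + 1) := by
        linarith [hp.mul_upperTail_succ_le h0 hsum n]
    _ = upperTail p n ^ 2 := by rw [h₂]; ring

end upperTail

theorem le_exp_neg_div_six_of_pow_mul_le {x t : ℝ} {s : ℕ} (hx : 0 ≤ x) (hts : t ≤ s + 3)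
    (h : x ^ 5 * (3 / 4) ^ s ≤ (1 / 4) ^ (5 + s)) : x ≤ exp (-t / 6) := by
  have h3 : (1 / 3 : ℝ) ≤ exp (-1) := by
    rw [exp_neg, one_div]
    exact inv_anti₀ (exp_pos 1) (by linarith [exp_one_lt_d9])
  have hx5 : x ^ 5 ≤ (1 / 4) ^ 5 * (1 / 3) ^ s := by
    refine le_of_mul_le_mul_right ?_ (pow_pos (by norm_num : (0 : ℝ) < 3 / 4) s)
    calc x ^ 5 * (3 / 4) ^ s ≤ (1 / 4) ^ (5 + s) := h
      _ = (1 / 4) ^ 5 * (1 / 3) ^ s * (3 / 4) ^ s := by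
        rw [pow_add, mul_assoc, ← mul_pow]; norm_num
  refine (pow_le_pow_iff_left₀ hx (exp_pos _).le (by norm_num : 5 ≠ 0)).1 ?_
  calc x ^ 5 ≤ (1 / 4) ^ 5 * (1 / 3) ^ s := hx5
    _ ≤ exp (-1) ^ 5 * exp (-1) ^ s := by gcongr; linarith
    _ = exp (-(5 + s)) := by rw [← exp_nat_mul, ← exp_nat_mul, ← exp_add]; ring_nf
    _ ≤ exp (-t / 6) ^ 5 := by
      rw [← exp_nat_mul, exp_le_exp]
      linarith [(Nat.cast_nonneg s : (0 : ℝ) ≤ s)]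

theorem IsLogConcavePMF.le_exp_of_anchor {T : ℤ → ℝ} (hT : IsLogConcavePMF T) (h0 : ∀ n, 0 ≤ T n)
    {a : ℤ} (ha : 3 / 4 ≤ T a) (hb : T (a + 5) ≤ 1 / 4) {s : ℕ} {t : ℝ} (hts : t ≤ s + 3) :
    T (a + 5 + s) ≤ exp (-t / 6) := by
  refine le_exp_neg_div_six_of_pow_mul_le (h0 _) hts ?_
  calc T (a + 5 + s) ^ 5 * (3 / 4) ^ s ≤ T (a + 5 + s) ^ 5 * T a ^ s := by
        gcongr
        exact pow_nonneg (h0 _) _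
    _ ≤ T (a + 5) ^ (5 + s) := by exact_mod_cast hT.decay h0 a 5 s
    _ ≤ (1 / 4) ^ (5 + s) := by gcongr; exact h0 _

section Probability

variable {Ω : Type*} [MeasurableSpace Ω] {μ : Measure Ω} {X : Ω → ℤ}

theorem measureReal_preimage_neg_singleton (k : ℤ) :
    μ.real ((fun ω => -X ω) ⁻¹' {k}) = μ.real (X ⁻¹' {-k}) := by
  congr 1
  ext ω
  simp [neg_eq_iff_eq_neg]

theorem summable_measureReal_preimage_singleton [IsFiniteMeasure μ] (hX : Measurable X) :
    Summable fun k => μ.real (X ⁻¹' {k}) := by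
  refine ENNReal.summable_toReal ?_
  rw [← measure_iUnion (fun i j hij => Set.disjoint_singleton.2 hij |>.preimage X)
    fun k => hX (measurableSet_singleton k)]
  exact measure_ne_top _ _

theorem measureReal_le_eq_upperTail [IsFiniteMeasure μ] (hX : Measurable X) (n : ℤ) :
    μ.real {ω | n ≤ X ω} = upperTail (fun k => μ.real (X ⁻¹' {k})) n := by
  have hunion : {ω | n ≤ X ω} = ⋃ j : ℕ, X ⁻¹' {n + j} := by
    ext ω
    simp only [Set.mem_ofPred_eq, Set.mem_iUnion, Set.mem_preimage, Set.mem_singleton_iff]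
    exact ⟨fun h => ⟨(X ω - n).toNat, by omega⟩, fun ⟨j, hj⟩ => by omega⟩
  rw [measureReal_def, hunion, measure_iUnion (fun i j hij => ?_)
    fun j => hX (measurableSet_singleton _), ENNReal.tsum_toReal_eq fun _ => measure_ne_top _ _]
  · rfl
  · exact (Set.disjoint_singleton.2 (by simpa using hij)).preimage X

theorem integrable_comp_of_summable [IsFiniteMeasure μ] (hX : Measurable X) {g : ℤ → ℝ}
    (hg : Summable fun k => μ.real (X ⁻¹' {k}) * ‖g k‖) :
    Integrable (fun ω => g (X ω)) μ := by
  refine (integrable_map_measure (measurable_of_countable g).aestronglyMeasurable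
    hX.aemeasurable).1 ?_
  rw [← Measure.sum_smul_dirac (μ.map X)]
  refine integrable_sum_dirac (fun _ => measure_ne_top _ _) ?_
  simpa [Measure.map_apply hX (measurableSet_singleton _), measureReal_def] using hg

theorem integrable_sq_sub_of_isLogConcavePMF [IsProbabilityMeasure μ] (hX : Measurable X)
    (hlc : IsLogConcavePMF fun k => μ.real (X ⁻¹' {k})) (m : ℝ) :
    Integrable (fun ω => ((X ω : ℝ) - m) ^ 2) μ := by
  refine integrable_comp_of_summable hX (g := fun k : ℤ => ((k : ℝ) - m) ^ 2) ?_
  refine (hlc.summable_sq_sub_mul (fun _ => measureReal_nonneg)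
    (summable_measureReal_preimage_singleton hX) m).congr fun k => ?_
  rw [Real.norm_of_nonneg (sq_nonneg _), mul_comm]

theorem measureReal_le_abs_sub_le {f : Ω → ℝ} {m : ℝ}
    (hf : Integrable (fun ω => (f ω - m) ^ 2) μ) {c : ℝ} (hc : 0 < c) :
    μ.real {ω | c ≤ |f ω - m|} ≤ (∫ ω, (f ω - m) ^ 2 ∂μ) / c ^ 2 := by
  have hset : {ω | c ≤ |f ω - m|} = {ω | c ^ 2 ≤ (f ω - m) ^ 2} := by
    ext ω
    simp [sq_le_sq, abs_of_pos hc]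
  rw [le_div_iff₀ (pow_pos hc 2), mul_comm, hset]
  exact mul_meas_ge_le_integral_of_nonneg (ae_of_all _ fun ω => sq_nonneg (f ω - m)) hf (c ^ 2)

theorem measureReal_add_le_le_exp [IsProbabilityMeasure μ] (hX : Measurable X)
    (hlc : IsLogConcavePMF fun k => μ.real (X ⁻¹' {k})) {m t : ℝ} (ht : 3 ≤ t)
    (hcheb : μ.real {ω | 2 ≤ |(X ω : ℝ) - m|} ≤ 1 / 4) :
    μ.real {ω | m + t ≤ X ω} ≤ exp (-t / 6) := by
  set p := fun k => μ.real (X ⁻¹' {k})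
  have h0 : ∀ k, 0 ≤ p k := fun _ => measureReal_nonneg
  have hsum : Summable p := summable_measureReal_preimage_singleton hX
  have hT : ∀ n, μ.real {ω | n ≤ X ω} = upperTail p n := measureReal_le_eq_upperTail hX
  set a := ⌊m⌋ - 2 with ha_def
  have ha_le : (a : ℝ) ≤ m - 2 := by rw [ha_def]; push_cast; linarith [Int.floor_le m]
  have ha_ge : m - 3 ≤ (a : ℝ) := by rw [ha_def]; push_cast; linarith [Int.lt_floor_add_one m]
  have ha : 3 / 4 ≤ upperTail p a := by
    have hlow : μ.real {ω | X ω < a} ≤ 1 / 4 := by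
      refine (measureReal_mono fun ω (hω : X ω < a) => ?_).trans hcheb
      have : (X ω : ℝ) ≤ a - 1 := by exact_mod_cast (show X ω ≤ a - 1 by omega)
      exact (show (2 : ℝ) ≤ -((X ω : ℝ) - m) by linarith).trans (neg_le_abs _)
    have hcompl : {ω | a ≤ X ω} = {ω | X ω < a}ᶜ := by ext; simp
    rw [← hT, hcompl, probReal_compl_eq_one_sub (s := {ω | X ω < a}) (hX measurableSet_Iio)]
    linarith
  have hb : upperTail p (a + 5) ≤ 1 / 4 := by
    refine (hT _).symm.le.trans ((measureReal_mono fun ω (hω : a + 5 ≤ X ω) => ?_).trans hcheb)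
    have : (a : ℝ) + 5 ≤ X ω := by exact_mod_cast hω
    exact (show (2 : ℝ) ≤ (X ω : ℝ) - m by linarith).trans (le_abs_self _)
  obtain ⟨s, hs⟩ : ∃ s : ℕ, a + 5 + s = ⌈m + t⌉ := by
    have : ((a + 5 : ℤ) : ℝ) ≤ ⌈m + t⌉ := by push_cast; linarith [Int.le_ceil (m + t)]
    exact ⟨(⌈m + t⌉ - (a + 5)).toNat, by have := Int.cast_le.1 this; omega⟩
  have hts : t ≤ s + 3 := by
    have : ((a + 5 + s : ℤ) : ℝ) = ⌈m + t⌉ := by rw [hs]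
    push_cast at this
    linarith [Int.le_ceil (m + t)]
  calc μ.real {ω | m + t ≤ X ω} ≤ μ.real {ω | ⌈m + t⌉ ≤ X ω} :=
        measureReal_mono fun ω hω => Int.ceil_le.2 hω
    _ = upperTail p (a + 5 + s) := by rw [hT, hs]
    _ ≤ exp (-t / 6) :=
        (hlc.isLogConcavePMF_upperTail h0 hsum).le_exp_of_anchor (upperTail_nonneg h0) ha hb hts

theorem measureReal_le_abs_sub_le_two_mul_exp [IsProbabilityMeasure μ] (hX : Measurable X)
    (hlc : IsLogConcavePMF fun k => μ.real (X ⁻¹' {k})) {m t : ℝ} (ht : 3 ≤ t)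
    (hcheb : μ.real {ω | 2 ≤ |(X ω : ℝ) - m|} ≤ 1 / 4) :
    μ.real {ω | t ≤ |(X ω : ℝ) - m|} ≤ 2 * exp (-t / 6) := by
  have hlc_neg : IsLogConcavePMF fun k => μ.real ((fun ω => -X ω) ⁻¹' {k}) := by
    simpa only [measureReal_preimage_neg_singleton] using hlc.comp_neg
  have hcheb_neg : μ.real {ω | 2 ≤ |((-X ω : ℤ) : ℝ) - -m|} ≤ 1 / 4 := by
    simpa only [Int.cast_neg, neg_sub_neg, abs_sub_comm] using hcheb
  have hsplit : {ω | t ≤ |(X ω : ℝ) - m|} ⊆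
      {ω | m + t ≤ X ω} ∪ {ω | -m + t ≤ ((-X ω : ℤ) : ℝ)} := by
    intro ω (hω : t ≤ |(X ω : ℝ) - m|)
    rcases le_abs'.1 hω with h | h
    · exact Or.inr (show -m + t ≤ ((-X ω : ℤ) : ℝ) by push_cast; linarith)
    · exact Or.inl (show m + t ≤ (X ω : ℝ) by linarith)
  calc μ.real {ω | t ≤ |(X ω : ℝ) - m|}
      ≤ μ.real {ω | m + t ≤ X ω} + μ.real {ω | -m + t ≤ ((-X ω : ℤ) : ℝ)} :=
        (measureReal_mono hsplit).trans (measureReal_union_le _ _)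
    _ ≤ exp (-t / 6) + exp (-t / 6) :=
        add_le_add (measureReal_add_le_le_exp hX hlc ht hcheb)
          (measureReal_add_le_le_exp hX.neg hlc_neg ht hcheb_neg)
    _ = 2 * exp (-t / 6) := by ring

end Probability

theorem concentration_bound_isotropic_general
    {Ω : Type*} [MeasureSpace Ω] [IsProbabilityMeasure (ℙ : Measure Ω)]
    (X : Ω → ℤ) (hX : Measurable X)
    (hlc : IsLogConcavePMF (fun k => (ℙ (X ⁻¹' {k})).toReal))
    (m : ℝ)
    (hvar : (∫ ω, ((X ω : ℝ) - m) ^ 2) ≤ 1)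
    (t : ℝ) :
    (ℙ {ω | t ≤ |(X ω : ℝ) - m|}).toReal ≤ 2 * Real.exp (-t / 6) := by
  have hcheb : (ℙ : Measure Ω).real {ω | 2 ≤ |(X ω : ℝ) - m|} ≤ 1 / 4 := by
    refine (measureReal_le_abs_sub_le (integrable_sq_sub_of_isLogConcavePMF hX hlc m)
      two_pos).trans ?_
    linarith
  rcases le_or_gt t 3 with ht3 | ht3
  · calc (ℙ : Measure Ω).real {ω | t ≤ |(X ω : ℝ) - m|} ≤ 1 := measureReal_le_one
      _ ≤ 2 * exp (-t / 6) := by linarith [add_one_le_exp (-t / 6)]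
  · exact measureReal_le_abs_sub_le_two_mul_exp hX hlc ht3.le hcheb

/-- If `X` is a log-concave integer-valued random variable with `Var(X) ≤ 1`, then
for all `t ≥ 0`, `P(|X − E[X]| ≥ t) ≤ 2·e^{−t/6}`. -/
theorem concentration_bound_isotropic
    {Ω : Type*} [MeasureSpace Ω] [IsProbabilityMeasure (ℙ : Measure Ω)]
    (X : Ω → ℤ) (hX : Measurable X)
    (hlc : IsLogConcavePMF (fun k => (ℙ (X ⁻¹' {k})).toReal))
    (m : ℝ) (hm : m = ∫ ω, (X ω : ℝ))
    (hvar : (∫ ω, ((X ω : ℝ) - m) ^ 2) ≤ 1)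
    (t : ℝ) (ht : 0 ≤ t) :
    (ℙ {ω | t ≤ |(X ω : ℝ) - m|}).toReal ≤ 2 * Real.exp (-t / 6) :=
  concentration_bound_isotropic_general X hX hlc m hvar t
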